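/- For thermal eigenvalues λ_m = n_e^m/(1+n_e)^{m+1} (environment mean photon number n_e > 0) and TMSV coefficients c_n² = n_p^n/(1+n_p)^{n+1} (probe mean photon number n_p > 0), one has (1/(4 n_e)) ∑_n (n+1) M(c_n², (n_e/(1+n_e)) c_{n+1}²) = n_p (1+n_e) / (1 + n_e + √(n_e n_p (1+n_e)/(1+n_p)))², where M(x,y) = 4xy/(√x+√y)². -/

import Mathlib

/-!
With `q = n_p/(1+n_p)` and `t = n_e n_p/((1+n_e)(1+n_p))`, the TMSV weights are
`c_n² = q^n/(1+n_p)` and the second argument of `M` is exactly `t c_n²`. Since `M` is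
homogeneous, `M(x, t x) = 4 t x/(1+√t)²`, so the series is `4t/((1+√t)²(1+n_p))` times
`∑ (n+1) q^n = (1-q)⁻² = (1+n_p)²`. What remains is algebra, using
`(1+n_e)√t = √(n_e n_p (1+n_e)/(1+n_p))`.
-/

open Real

/-- The mean function M(x,y) = 4xy/(√x+√y)². -/
noncomputable def meanM (x y : ℝ) : ℝ := 4 * x * y / (Real.sqrt x + Real.sqrt y) ^ 2

lemma meanM_mul_left {x : ℝ} (t : ℝ) (hx : 0 ≤ x) (ht : 0 ≤ t) :
    meanM x (t * x) = 4 * t * x / (1 + √t) ^ 2 := by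
  rcases hx.eq_or_lt with rfl | hx
  · simp [meanM]
  have hsum : √x + √(t * x) = (1 + √t) * √x := by rw [sqrt_mul ht]; ring
  have hpos : 0 < 1 + √t := by positivity
  rw [meanM, hsum, mul_pow, sq_sqrt hx.le]
  field_simp

lemma hasSum_succ_mul_geometric {𝕜 : Type*} [NormedField 𝕜] [CompleteSpace 𝕜] {r : 𝕜}
    (hr : ‖r‖ < 1) : HasSum (fun n : ℕ ↦ ((n : 𝕜) + 1) * r ^ n) (1 / (1 - r) ^ 2) := by
  simpa using hasSum_choose_mul_geometric_of_norm_lt_one 1 hr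

lemma hasSum_succ_mul_meanM_geometric (t : ℝ) {a q : ℝ} (ha : 0 ≤ a) (ht : 0 ≤ t)
    (hq₀ : 0 ≤ q) (hq₁ : q < 1) :
    HasSum (fun n : ℕ ↦ ((n : ℝ) + 1) * meanM (a * q ^ n) (t * (a * q ^ n)))
      (4 * t * a / ((1 + √t) ^ 2 * (1 - q) ^ 2)) := by
  have hq : ‖q‖ < 1 := by rwa [norm_of_nonneg hq₀]
  have hpos : 0 < 1 + √t := by positivity
  have hq' : 1 - q ≠ 0 := by linarith
  have hterm : (fun n : ℕ ↦ ((n : ℝ) + 1) * meanM (a * q ^ n) (t * (a * q ^ n)))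
      = fun n : ℕ ↦ 4 * t * a / (1 + √t) ^ 2 * (((n : ℝ) + 1) * q ^ n) := by
    ext n
    rw [meanM_mul_left t (by positivity) ht]
    ring
  have hsum : 4 * t * a / ((1 + √t) ^ 2 * (1 - q) ^ 2)
      = 4 * t * a / (1 + √t) ^ 2 * (1 / (1 - q) ^ 2) := by field_simp
  rw [hterm, hsum]
  exact (hasSum_succ_mul_geometric hq).mul_left _

lemma pow_div_pow_succ {K : Type*} [Field K] (a b : K) (n : ℕ) :
    a ^ n / b ^ (n + 1) = 1 / b * (a / b) ^ n := by
  rw [div_pow, pow_succ]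
  ring

/-- Closed form of the quantum Chernoff exponent coefficient G/(4n_e) for the
    TMSV probe in a thermal environment. -/
theorem tmsv_chernoff_coefficient (ne np : ℝ) (hne : 0 < ne) (hnp : 0 < np) :
    (1 / (4 * ne)) * ∑' n : ℕ,
      ((n : ℝ) + 1) * meanM (np ^ n / (1 + np) ^ (n + 1))
        ((ne / (1 + ne)) * (np ^ (n + 1) / (1 + np) ^ (n + 2)))
    = np * (1 + ne)
        / (1 + ne + Real.sqrt (ne * np * (1 + ne) / (1 + np))) ^ 2 := by
  have hnext (n : ℕ) : ne / (1 + ne) * (np ^ (n + 1) / (1 + np) ^ (n + 2))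
      = ne * np / ((1 + ne) * (1 + np)) * (np ^ n / (1 + np) ^ (n + 1)) := by
    field_simp
    ring
  have hroot : √(ne * np * (1 + ne) / (1 + np))
      = (1 + ne) * √(ne * np / ((1 + ne) * (1 + np))) := by
    rw [show ne * np * (1 + ne) / (1 + np) = (1 + ne) ^ 2 * (ne * np / ((1 + ne) * (1 + np))) by
        field_simp, sqrt_mul (by positivity), sqrt_sq (by positivity)]
  have hq : np / (1 + np) < 1 := (div_lt_one (by positivity)).mpr (by linarith)
  rw [tsum_congr fun n ↦ by rw [hnext, pow_div_pow_succ],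
    (hasSum_succ_mul_meanM_geometric _ (by positivity) (by positivity) (by positivity) hq).tsum_eq,
    hroot]
  generalize √(ne * np / ((1 + ne) * (1 + np))) = s
  field_simp
  ring
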